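/- arXiv:1107.0906 — 2 statements merged into one kernel-verified Lean document; each statement's English description precedes it below -/
import Mathlib

section
/- Let p be a prime and r ≥ 1 an integer. Define a_p(p^r) = (1 + (p-1)r)/(p(p^r - 1)) and a(p^r) = p/(p^r (p-1)) (the Malle constant for the elementary abelian group C_p^r, whose smallest prime divisor of the order is p). Then a_p(p^r) = a(p^r) if (p,r) = (p,1) for any prime p or (p,r) = (2,2), and a_p(p^r) > a(p^r) in all other cases (i.e., r ≥ 2 and (p,r) ≠ (2,2)). -/
/-!
Clearing denominators, `a(p^r) < a_p(p^r)` follows from `p² ≤ (1 + (p - 1) r)(p - 1)`, since then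
`p · p(p^r - 1) < p² p^r ≤ (1 + (p - 1) r)(p - 1) p^r`. For `p ≥ 3` and `r ≥ 2` the right-hand side
is at least `(2p - 1)(p - 1) = p² + p(p - 3) + 1`; for `p = 2` it is `1 + r`, which is at least `4`
once `r ≥ 3`. The equality cases `r = 1` and `(p, r) = (2, 2)` are direct computations.
-/

variable {K : Type*} [Field K] [LinearOrder K] [IsStrictOrderedRing K]

/-- The constant `a_p(C_p^r)` coming from conductors of Artin–Schreier extensions. -/
def artinSchreierConst (p : K) (r : ℕ) : K := (1 + (p - 1) * r) / (p * (p ^ r - 1))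

/-- Malle's constant `a(C_p^r)`. -/
def malleConst (p : K) (r : ℕ) : K := p / (p ^ r * (p - 1))

theorem artinSchreierConst_one {p : K} (hp : 1 < p) :
    artinSchreierConst p 1 = malleConst p 1 := by
  have hp0 : p ≠ 0 := by positivity
  have hp1 : p - 1 ≠ 0 := sub_ne_zero.mpr hp.ne'
  simp only [artinSchreierConst, malleConst, pow_one, Nat.cast_one, mul_one]
  field_simp
  ring

theorem artinSchreierConst_two_two : artinSchreierConst (2 : K) 2 = malleConst 2 2 := by
  norm_num [artinSchreierConst, malleConst]

theorem sq_le_of_three_le {p r : K} (hp : 3 ≤ p) (hr : 2 ≤ r) :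
    p ^ 2 ≤ (1 + (p - 1) * r) * (p - 1) :=
  calc p ^ 2 ≤ p ^ 2 + p * (p - 3) + 1 := by nlinarith
    _ = (1 + (p - 1) * 2) * (p - 1) := by ring
    _ ≤ (1 + (p - 1) * r) * (p - 1) := by gcongr <;> linarith

theorem malleConst_lt_artinSchreierConst {p : K} {r : ℕ} (hp : 1 < p) (hr : r ≠ 0)
    (h : p ^ 2 ≤ (1 + (p - 1) * r) * (p - 1)) :
    malleConst p r < artinSchreierConst p r := by
  have hpr : 1 < p ^ r := one_lt_pow₀ hp hr
  have hp0 : 0 < p := by positivity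
  rw [malleConst, artinSchreierConst, div_lt_div_iff₀ (by nlinarith) (by nlinarith)]
  calc p * (p * (p ^ r - 1)) < p ^ 2 * p ^ r := by nlinarith
    _ ≤ (1 + (p - 1) * r) * (p - 1) * p ^ r := by gcongr
    _ = (1 + (p - 1) * r) * (p ^ r * (p - 1)) := by ring

theorem stmt_0_general (p r : ℕ) (hp : p.Prime) :
    (((r = 1 ∨ (p = 2 ∧ r = 2)) →
        (1 + ((p : ℚ) - 1) * r) / (p * ((p : ℚ) ^ r - 1)) =
          (p : ℚ) / ((p : ℚ) ^ r * ((p : ℚ) - 1))) ∧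
      ((2 ≤ r ∧ ¬(p = 2 ∧ r = 2)) →
        (1 + ((p : ℚ) - 1) * r) / (p * ((p : ℚ) ^ r - 1)) >
          (p : ℚ) / ((p : ℚ) ^ r * ((p : ℚ) - 1)))) := by
  change (_ → artinSchreierConst (p : ℚ) r = malleConst (p : ℚ) r) ∧
    (_ → malleConst (p : ℚ) r < artinSchreierConst (p : ℚ) r)
  have hp1 : (1 : ℚ) < p := by exact_mod_cast hp.one_lt
  refine ⟨?_, fun ⟨hr, hne⟩ => malleConst_lt_artinSchreierConst hp1 (by omega) ?_⟩
  · rintro (rfl | ⟨rfl, rfl⟩)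
    · exact artinSchreierConst_one hp1
    · exact_mod_cast artinSchreierConst_two_two (K := ℚ)
  obtain rfl | hp3 : p = 2 ∨ 3 ≤ p := by have := hp.two_le; omega
  · have hr3 : (3 : ℚ) ≤ r := by exact_mod_cast (by omega : 3 ≤ r)
    norm_num
    linarith
  · exact sq_le_of_three_le (by exact_mod_cast hp3) (by exact_mod_cast hr)

theorem stmt_0 (p r : ℕ) (hp : p.Prime) (hr : 1 ≤ r) :
    (((r = 1 ∨ (p = 2 ∧ r = 2)) →
        (1 + ((p : ℚ) - 1) * r) / (p * ((p : ℚ) ^ r - 1)) =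
          (p : ℚ) / ((p : ℚ) ^ r * ((p : ℚ) - 1))) ∧
      ((2 ≤ r ∧ ¬(p = 2 ∧ r = 2)) →
        (1 + ((p : ℚ) - 1) * r) / (p * ((p : ℚ) ^ r - 1)) >
          (p : ℚ) / ((p : ℚ) ^ r * ((p : ℚ) - 1)))) :=
  stmt_0_general p r hp
end

section
/- Fix a real number R with 0 < R < 1, an integer l ≥ 0, and a complex number t with |t| = R. Then |Σ_{n=0}^{m} C(n+l,l) t^{-n} − (1/(l!(1−t))) t^{-m} m^l| = o(R^{-m} m^l) as m → ∞. -/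
open Asymptotics Filter Topology

private lemma inv_nat_tendsto_complex : Tendsto (fun m : ℕ => ((m : ℂ))⁻¹) atTop (𝓝 0) := by
  rw [tendsto_zero_iff_norm_tendsto_zero]
  simpa using tendsto_inv_atTop_nhds_zero_nat

private lemma factor_tendsto (k j : ℕ) :
    Tendsto (fun m : ℕ => (((m - k + j : ℕ) : ℂ)) / (m : ℂ)) atTop (𝓝 1) := by
  have h : Tendsto (fun m : ℕ => 1 + (((j : ℂ) - k)) * ((m : ℂ))⁻¹) atTop (𝓝 1) := by
    have h2 := inv_nat_tendsto_complex.const_mul ((j : ℂ) - k)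
    simpa using (tendsto_const_nhds (x := (1 : ℂ)) (f := atTop)).add h2
  refine h.congr' ?_
  filter_upwards [eventually_ge_atTop (k + 1)] with m hm
  have hk : k ≤ m := by omega
  have hm0 : (m : ℂ) ≠ 0 := Nat.cast_ne_zero.mpr (by omega)
  have hcast : ((m - k + j : ℕ) : ℂ) = (m : ℂ) - k + j := by
    push_cast [Nat.cast_sub hk]; ring
  rw [hcast]
  field_simp
  ring

private lemma choose_tendsto (k l : ℕ) :
    Tendsto (fun m : ℕ => (((m - k + l).choose l : ℂ)) / (m : ℂ) ^ l) atTop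
      (𝓝 (1 / (l.factorial : ℂ))) := by
  have hprod : Tendsto (fun m : ℕ => ∏ i ∈ Finset.range l, (((m - k + l - i : ℕ) : ℂ)) / (m : ℂ))
      atTop (𝓝 (∏ _i ∈ Finset.range l, (1 : ℂ))) := by
    refine tendsto_finset_prod _ fun i hi => ?_
    have hi' : i ≤ l := le_of_lt (Finset.mem_range.mp hi)
    have heq : ∀ m : ℕ, m - k + l - i = m - k + (l - i) := fun m => by omega
    simpa [heq] using factor_tendsto k (l - i)
  rw [Finset.prod_const_one] at hprod
  have h := hprod.const_mul (((l.factorial : ℂ))⁻¹)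
  rw [mul_one] at h
  have heq : ∀ m : ℕ,
      ((l.factorial : ℂ))⁻¹ * ∏ i ∈ Finset.range l, (((m - k + l - i : ℕ) : ℂ)) / (m : ℂ)
        = (((m - k + l).choose l : ℂ)) / (m : ℂ) ^ l := by
    intro m
    have hfac : ((l.factorial : ℂ)) ≠ 0 := Nat.cast_ne_zero.mpr l.factorial_ne_zero
    rw [Finset.prod_div_distrib, Finset.prod_const, Finset.card_range, ← Nat.cast_prod,
      ← Nat.descFactorial_eq_prod_range, Nat.descFactorial_eq_factorial_mul_choose]
    push_cast
    rw [← mul_div_assoc, inv_mul_cancel_left₀ hfac]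
  have h1 : (1 : ℂ) / (l.factorial : ℂ) = ((l.factorial : ℂ))⁻¹ := one_div _
  rw [h1]
  exact h.congr heq

private lemma key_tendsto (R : ℝ) (hR0 : 0 < R) (hR1 : R < 1) (l : ℕ) (t : ℂ) (ht : ‖t‖ = R) :
    Tendsto (fun m : ℕ =>
        (∑ k ∈ Finset.range (m + 1), ((m - k + l).choose l : ℂ) * t ^ k) / (m : ℂ) ^ l)
      atTop (𝓝 (1 / ((l.factorial : ℂ) * (1 - t)))) := by
  have ht1 : ‖t‖ < 1 := by rw [ht]; exact hR1
  set f : ℕ → ℕ → ℂ := fun m k =>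
    if k ≤ m then ((m - k + l).choose l : ℂ) * t ^ k / (m : ℂ) ^ l else 0 with hf
  set g : ℕ → ℂ := fun k => (1 / (l.factorial : ℂ)) * t ^ k with hg
  have hsum : Summable (fun k : ℕ => ((l + 1 : ℝ)) ^ l / (l.factorial : ℝ) * R ^ k) :=
    (summable_geometric_of_lt_one hR0.le hR1).mul_left _
  have hab : ∀ k : ℕ, Tendsto (f · k) atTop (𝓝 (g k)) := by
    intro k
    have := (choose_tendsto k l).mul_const (t ^ k)
    refine this.congr' ?_
    filter_upwards [eventually_ge_atTop k] with m hm
    simp only [hf, if_pos hm]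
    ring
  have h_bound : ∀ᶠ m in atTop, ∀ k : ℕ,
      ‖f m k‖ ≤ ((l + 1 : ℝ)) ^ l / (l.factorial : ℝ) * R ^ k := by
    filter_upwards [eventually_ge_atTop 1] with m hm k
    have hRk : (0 : ℝ) ≤ R ^ k := pow_nonneg hR0.le k
    have hbnd0 : (0 : ℝ) ≤ ((l + 1 : ℝ)) ^ l / (l.factorial : ℝ) := by positivity
    by_cases hk : k ≤ m
    · simp only [hf, if_pos hk]
      rw [norm_div, norm_mul, norm_pow, norm_pow, Complex.norm_natCast, Complex.norm_natCast, ht]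
      have hml : (0 : ℝ) < ((m : ℝ)) ^ l := pow_pos (by exact_mod_cast hm) l
      have hfacpos : (0 : ℝ) < (l.factorial : ℝ) := by exact_mod_cast l.factorial_pos
      have hnat : (m - k + l).choose l * l.factorial ≤ (l + 1) ^ l * m ^ l := by
        calc (m - k + l).choose l * l.factorial
            = (m - k + l).descFactorial l := by
              rw [Nat.descFactorial_eq_factorial_mul_choose]; ring
          _ ≤ (m - k + l) ^ l := Nat.descFactorial_le_pow _ _
          _ ≤ ((l + 1) * m) ^ l := Nat.pow_le_pow_left (by nlinarith [Nat.sub_le m k, Nat.le_mul_of_pos_right l (show 0 < m by omega)]) l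
          _ = (l + 1) ^ l * m ^ l := mul_pow _ _ _
      have hcore : (((m - k + l).choose l : ℝ)) / ((m : ℝ)) ^ l
          ≤ ((l + 1 : ℝ)) ^ l / (l.factorial : ℝ) := by
        rw [div_le_div_iff₀ hml hfacpos]
        exact_mod_cast hnat
      calc (((m - k + l).choose l : ℝ)) * R ^ k / ((m : ℝ)) ^ l
          = (((m - k + l).choose l : ℝ)) / ((m : ℝ)) ^ l * R ^ k := by ring
        _ ≤ ((l + 1 : ℝ)) ^ l / (l.factorial : ℝ) * R ^ k :=
            mul_le_mul_of_nonneg_right hcore hRk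
    · simp only [hf, if_neg hk, norm_zero]
      positivity
  have hDCT := tendsto_tsum_of_dominated_convergence hsum hab h_bound
  have htsum_g : ∑' k, g k = 1 / ((l.factorial : ℂ) * (1 - t)) := by
    rw [hg]
    rw [tsum_mul_left, tsum_geometric_of_norm_lt_one ht1, one_div, one_div, mul_inv]
  rw [htsum_g] at hDCT
  refine hDCT.congr' ?_
  refine Filter.Eventually.of_forall fun m => ?_
  have h1 : (∑' k, f m k) = ∑ k ∈ Finset.range (m + 1), f m k := by
    refine tsum_eq_sum fun k hk => ?_
    have : ¬ k ≤ m := by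
      intro h; exact hk (Finset.mem_range.mpr (by omega))
    simp [hf, this]
  show (∑' k, f m k) = (∑ k ∈ Finset.range (m + 1), ((m - k + l).choose l : ℂ) * t ^ k) / (m : ℂ) ^ l
  rw [h1, Finset.sum_div]
  refine Finset.sum_congr rfl fun k hk => ?_
  have hk' : k ≤ m := by
    have := Finset.mem_range.mp hk; omega
  simp [hf, hk']

theorem stmt_10 (R : ℝ) (hR0 : 0 < R) (hR1 : R < 1) (l : ℕ) (t : ℂ) (ht : ‖t‖ = R) :
    (fun m : ℕ =>
        (∑ n ∈ Finset.range (m + 1), ((n + l).choose l : ℂ) * t ^ (-(n : ℤ))) -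
          (1 / ((l.factorial : ℂ) * (1 - t))) * t ^ (-(m : ℤ)) * (m : ℂ) ^ l)
      =o[atTop] (fun m : ℕ => R ^ (-(m : ℤ)) * (m : ℝ) ^ l) := by
  have ht0 : t ≠ 0 := by
    rw [← norm_ne_zero_iff, ht]; exact ne_of_gt hR0
  set c : ℂ := 1 / ((l.factorial : ℂ) * (1 - t)) with hc
  set G : ℕ → ℂ := fun m => ∑ k ∈ Finset.range (m + 1), ((m - k + l).choose l : ℂ) * t ^ k
    with hG
  have key := key_tendsto R hR0 hR1 l t ht
  have h2 : Tendsto (fun m : ℕ => (G m - c * (m : ℂ) ^ l) / (m : ℂ) ^ l) atTop (𝓝 0) := by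
    have h3 := key.sub (tendsto_const_nhds (x := c) (f := atTop))
    rw [sub_self] at h3
    refine h3.congr' ?_
    filter_upwards [eventually_ge_atTop 1] with m hm
    have hm0 : ((m : ℂ)) ^ l ≠ 0 := pow_ne_zero _ (Nat.cast_ne_zero.mpr (by omega))
    field_simp
    ring
  rw [isLittleO_iff]
  intro ε hε
  have h2' := (NormedAddCommGroup.tendsto_nhds_zero.mp h2) ε hε
  filter_upwards [h2', eventually_ge_atTop 1] with m hnorm hm
  have hm0 : (1 : ℕ) ≤ m := hm
  have hGm : G m = t ^ ((m : ℤ)) * ∑ n ∈ Finset.range (m + 1),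
      ((n + l).choose l : ℂ) * t ^ (-(n : ℤ)) := by
    rw [Finset.mul_sum, ← Finset.sum_range_reflect]
    refine Finset.sum_congr rfl fun j hj => ?_
    have hj' : j ≤ m := by
      have := Finset.mem_range.mp hj; omega
    have h1 : m + 1 - 1 - j = m - j := by omega
    rw [h1]
    have h2 : t ^ j = t ^ ((m : ℤ)) * t ^ (-((m - j : ℕ) : ℤ)) := by
      rw [← zpow_natCast t j, ← zpow_add₀ ht0]
      congr 1
      push_cast [Nat.cast_sub hj']
      ring
    rw [h2]
    ring
  have hfm : (∑ n ∈ Finset.range (m + 1), ((n + l).choose l : ℂ) * t ^ (-(n : ℤ))) -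
      c * t ^ (-(m : ℤ)) * (m : ℂ) ^ l = t ^ (-(m : ℤ)) * (G m - c * (m : ℂ) ^ l) := by
    rw [hGm, mul_sub, ← mul_assoc, zpow_neg, inv_mul_cancel₀ (zpow_ne_zero _ ht0), one_mul]
    ring
  rw [hfm, norm_mul]
  have hz : ‖t ^ (-(m : ℤ))‖ = R ^ (-(m : ℤ)) := by rw [norm_zpow, ht]
  have hml : (0 : ℝ) < ((m : ℝ)) ^ l := pow_pos (by exact_mod_cast hm0) l
  have hb : ‖G m - c * (m : ℂ) ^ l‖ ≤ ε * ((m : ℝ)) ^ l := by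
    rw [norm_div, norm_pow, Complex.norm_natCast, div_lt_iff₀ hml] at hnorm
    linarith
  have hRm : (0 : ℝ) < R ^ (-(m : ℤ)) := zpow_pos hR0 _
  rw [hz, Real.norm_of_nonneg (by positivity)]
  calc R ^ (-(m : ℤ)) * ‖G m - c * (m : ℂ) ^ l‖
      ≤ R ^ (-(m : ℤ)) * (ε * ((m : ℝ)) ^ l) := mul_le_mul_of_nonneg_left hb hRm.le
    _ = ε * (R ^ (-(m : ℤ)) * ((m : ℝ)) ^ l) := by ring
end
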